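/- Let n be divisible by 4, and let G be the cubic bipartite graph with vertex set {x_i, y_i : i ∈ ℤ_n} and edges x_i y_{i-1}, x_i y_i, x_i y_{i+1} (indices mod n). Then the clique number of G² is 4 and χ(G²) = 4. -/

import Mathlib

/-!
Reducing indices modulo 4 is a homomorphism from the cubic graph onto its 8-vertex instance
for `n = 4` that is injective on every neighbourhood (the neighbours `i - 1, i, i + 1` stay
distinct mod 4), hence also a homomorphism of the squares. The square of the 8-vertex graph is
4-coloured by `x_i ↦ i`, `y_i ↦ i + 2`, and `x_0, x_1, y_0, y_1` is a 4-clique, so the clique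
number and the chromatic number are both 4.
-/

open SimpleGraph

/-- The square of a graph: vertices at distance at most 2 are adjacent. -/
def square {V : Type*} (G : SimpleGraph V) : SimpleGraph V where
  Adj u v := u ≠ v ∧ (G.Adj u v ∨ ∃ w, G.Adj u w ∧ G.Adj w v)
  symm := ⟨by
    rintro u v ⟨h, h2 | ⟨w, hw1, hw2⟩⟩
    · exact ⟨h.symm, Or.inl h2.symm⟩
    · exact ⟨h.symm, Or.inr ⟨w, hw2.symm, hw1.symm⟩⟩⟩
  loopless := ⟨fun u h => h.1 rfl⟩

/-- The cubic bipartite graph on `{x_i} ⊕ {y_i}`, `i ∈ ZMod n`, with edges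
`x_i y_{i-1}`, `x_i y_i`, `x_i y_{i+1}`. -/
def cubicGraphB (n : ℕ) : SimpleGraph (ZMod n ⊕ ZMod n) where
  Adj a b := match a, b with
    | .inl i, .inr j => j = i - 1 ∨ j = i ∨ j = i + 1
    | .inr j, .inl i => j = i - 1 ∨ j = i ∨ j = i + 1
    | _, _ => False
  symm := ⟨by
    rintro (i | i) (j | j) h
    · exact h.elim
    · exact h
    · exact h
    · exact h.elim⟩
  loopless := ⟨by rintro (i | i) h <;> exact h⟩

section Square

variable {V W : Type*} {G : SimpleGraph V} {H : SimpleGraph W}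

instance [Fintype V] [DecidableEq V] [DecidableRel G.Adj] : DecidableRel (square G).Adj :=
  fun u v => inferInstanceAs (Decidable (u ≠ v ∧ (G.Adj u v ∨ ∃ w, G.Adj u w ∧ G.Adj w v)))

def squareHom (f : G →g H) (hf : ∀ w, Set.InjOn f (G.neighborSet w)) :
    square G →g square H where
  toFun := f
  map_rel' := by
    rintro u v ⟨huv, hadj | ⟨w, huw, hwv⟩⟩
    · exact ⟨H.ne_of_adj (f.map_adj hadj), Or.inl (f.map_adj hadj)⟩
    · exact ⟨fun h => huv (hf w huw.symm hwv h), Or.inr ⟨f w, f.map_adj huw, f.map_adj hwv⟩⟩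

lemma cliqueNum_eq_of_isNClique_of_colorable {s : Finset V} {k : ℕ} (hs : G.IsNClique k s)
    (hc : G.Colorable k) : G.cliqueNum = k :=
  IsGreatest.csSup_eq ⟨⟨s, hs⟩, fun _ ⟨_, ht⟩ => ht.card_eq ▸ ht.isClique.card_le_of_colorable hc⟩

lemma chromaticNumber_eq_of_isNClique_of_colorable {s : Finset V} {k : ℕ}
    (hs : G.IsNClique k s) (hc : G.Colorable k) : G.chromaticNumber = k :=
  le_antisymm hc.chromaticNumber_le (hs.card_eq ▸ hs.isClique.card_le_chromaticNumber)

end Square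

lemma ZMod.castHom_injOn_neg_one_zero_one {m n : ℕ} (hm : 3 ≤ m) (h : m ∣ n) :
    Set.InjOn (ZMod.castHom h (ZMod m)) {-1, 0, 1} := by
  have : Fact (1 < m) := ⟨by omega⟩
  have : Fact (2 < m) := ⟨hm⟩
  have h₁ : (-1 : ZMod m) ≠ 0 := neg_ne_zero.2 one_ne_zero
  have h₂ : (-1 : ZMod m) ≠ 1 := ZMod.neg_one_ne_one
  simp only [Set.InjOn, Set.mem_insert_iff, Set.mem_singleton_iff]
  rintro d (rfl | rfl | rfl) e (rfl | rfl | rfl) hde <;> simp_all [eq_comm]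

section CubicGraphB

variable {m n : ℕ}

instance : DecidableRel (cubicGraphB n).Adj
  | .inl i, .inr j => inferInstanceAs (Decidable (j = i - 1 ∨ j = i ∨ j = i + 1))
  | .inr j, .inl i => inferInstanceAs (Decidable (j = i - 1 ∨ j = i ∨ j = i + 1))
  | .inl _, .inl _ => isFalse id
  | .inr _, .inr _ => isFalse id

lemma cubicGraphB_adj_inl_inr {i j : ZMod n} :
    (cubicGraphB n).Adj (.inl i) (.inr j) ↔ j - i ∈ ({-1, 0, 1} : Set (ZMod n)) := by
  simp only [cubicGraphB, Set.mem_insert_iff, Set.mem_singleton_iff, sub_eq_iff_eq_add',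
    add_zero, ← sub_eq_add_neg]

lemma cubicGraphB_adj_inr_inl {i j : ZMod n} :
    (cubicGraphB n).Adj (.inr j) (.inl i) ↔ j - i ∈ ({-1, 0, 1} : Set (ZMod n)) :=
  (cubicGraphB n).adj_comm _ _ |>.trans cubicGraphB_adj_inl_inr

def cubicGraphBCastHom (h : m ∣ n) : cubicGraphB n →g cubicGraphB m where
  toFun := Sum.map (ZMod.castHom h (ZMod m)) (ZMod.castHom h (ZMod m))
  map_rel' := by
    have maps : Set.MapsTo (ZMod.castHom h (ZMod m)) {-1, 0, 1} {-1, 0, 1} := by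
      rintro d (rfl | rfl | rfl) <;> simp only [map_neg, map_zero, map_one] <;> simp
    rintro (i | i) (j | j) hij
    · exact hij.elim
    · simp only [Sum.map_inl, Sum.map_inr, cubicGraphB_adj_inl_inr] at hij ⊢
      simpa only [map_sub] using maps hij
    · simp only [Sum.map_inl, Sum.map_inr, cubicGraphB_adj_inr_inl] at hij ⊢
      simpa only [map_sub] using maps hij
    · exact hij.elim

lemma cubicGraphBCastHom_injOn_neighborSet (hm : 3 ≤ m) (h : m ∣ n) (w : ZMod n ⊕ ZMod n) :
    Set.InjOn (cubicGraphBCastHom h) ((cubicGraphB n).neighborSet w) := by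
  intro a ha b hb hab
  rw [mem_neighborSet] at ha hb
  have inj := ZMod.castHom_injOn_neg_one_zero_one hm h
  rcases w with i | i <;> rcases a with j | j <;> rcases b with k | k <;>
    first | exact ha.elim | exact hb.elim | skip
  · rw [cubicGraphB_adj_inl_inr] at ha hb
    simp only [cubicGraphBCastHom, RelHom.coeFn_mk, Sum.map_inr, Sum.inr.injEq] at hab
    simpa using inj ha hb (by simp only [map_sub, hab])
  · rw [cubicGraphB_adj_inr_inl] at ha hb
    simp only [cubicGraphBCastHom, RelHom.coeFn_mk, Sum.map_inl, Sum.inl.injEq] at hab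
    simpa using inj ha hb (by simp only [map_sub, hab])

lemma colorable_square_cubicGraphB_four : (square (cubicGraphB 4)).Colorable 4 := by
  simpa using (Coloring.mk (α := ZMod 4) (Sum.elim id (· + 2)) (by decide)).colorable

lemma colorable_square_cubicGraphB (h4 : 4 ∣ n) : (square (cubicGraphB n)).Colorable 4 :=
  colorable_square_cubicGraphB_four.of_hom <|
    squareHom (cubicGraphBCastHom h4) (cubicGraphBCastHom_injOn_neighborSet (by norm_num) h4)

lemma isNClique_square_cubicGraphB (hn : n ≠ 1) :
    (square (cubicGraphB n)).IsNClique 4 {.inl 0, .inl 1, .inr 0, .inr 1} := by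
  have : Nontrivial (ZMod n) := ZMod.nontrivial_iff.2 hn
  refine ⟨?_, by simp⟩
  simp [IsClique, Set.pairwise_insert, square, cubicGraphB, and_or_left, exists_or]

end CubicGraphB

theorem stmt3_general (n : ℕ) (h4 : 4 ∣ n) :
    (square (cubicGraphB n)).cliqueNum = 4 ∧
    (square (cubicGraphB n)).chromaticNumber = 4 := by
  have hclique := isNClique_square_cubicGraphB (n := n) (by rintro rfl; norm_num at h4)
  have hcol := colorable_square_cubicGraphB h4
  exact ⟨cliqueNum_eq_of_isNClique_of_colorable hclique hcol,
    chromaticNumber_eq_of_isNClique_of_colorable hclique hcol⟩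

/-- For `n` divisible by 4, the square of the graph has clique number 4 and
chromatic number 4. -/
theorem stmt3 (n : ℕ) (hn : 0 < n) (h4 : 4 ∣ n) :
    (square (cubicGraphB n)).cliqueNum = 4 ∧
    (square (cubicGraphB n)).chromaticNumber = 4 :=
  stmt3_general n h4
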